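/- Let k be a positive semidefinite kernel on a set S, let x_1, …, x_t ∈ S and σ > 0, and define K_t, k_t(s) and σ_t²(s) as in the context. Then for every x ∈ S, k_t(x)ᵀ (K_t + σ² I_t)⁻² k_t(x) ≤ σ^{−2} · σ_t²(x). -/

import Mathlib

open Matrix

/-- A symmetric positive semidefinite kernel on a set `S`: symmetric, and every finite
Gram matrix is positive semidefinite. -/
def IsPSDKernel {S : Type*} (k : S → S → ℝ) : Prop :=
  (∀ x y, k x y = k y x) ∧
    ∀ (n : ℕ) (x : Fin n → S), (Matrix.of fun i j => k (x i) (x j)).PosSemidef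

/-- Regularized Gram matrix `K_t + σ² I`. -/
noncomputable def gramReg {S : Type*} (k : S → S → ℝ) (σ : ℝ) {t : ℕ}
    (x : Fin t → S) : Matrix (Fin t) (Fin t) ℝ :=
  (Matrix.of fun i j => k (x i) (x j)) + σ ^ 2 • (1 : Matrix (Fin t) (Fin t) ℝ)

/-- Kernel vector `k_t(s) = (k(s,x_1),…,k(s,x_t))ᵀ`. -/
noncomputable def kvec {S : Type*} (k : S → S → ℝ) {t : ℕ} (x : Fin t → S) (s : S) :
    Fin t → ℝ :=
  fun i => k s (x i)

/-- GP posterior variance `σ_t²(s) = k(s,s) − k_t(s)ᵀ(K_t+σ²I)⁻¹k_t(s)`. -/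
noncomputable def postVar {S : Type*} (k : S → S → ℝ) (σ : ℝ) {t : ℕ}
    (x : Fin t → S) (s : S) : ℝ :=
  k s s - kvec k x s ⬝ᵥ ((gramReg k σ x)⁻¹ *ᵥ kvec k x s)

/-- GP posterior mean `μ_t(s) = k_t(s)ᵀ(K_t+σ²I)⁻¹ y` for targets `y`. -/
noncomputable def postMean {S : Type*} (k : S → S → ℝ) (σ : ℝ) {t : ℕ}
    (x : Fin t → S) (y : Fin t → ℝ) (s : S) : ℝ :=
  kvec k x s ⬝ᵥ ((gramReg k σ x)⁻¹ *ᵥ y)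

/-!
Put `w = (K_t + σ² I)⁻¹ k_t(s)`. Since `K_t + σ² I` is symmetric, the left-hand side is `‖w‖²`, and
`k_t(s) ⬝ w = wᵀ K_t w + σ² ‖w‖²`. Positivity of the Gram matrix of `(s, x_1, …, x_t)` at the
vector `(1, -w)` gives `2 k_t(s) ⬝ w ≤ k(s,s) + wᵀ K_t w`; subtracting the two yields
`σ² ‖w‖² ≤ k(s,s) - k_t(s) ⬝ w = σ_t²(s)`.
-/

theorem Matrix.IsSymm.dotProduct_mul_self_mulVec {n R : Type*} [Fintype n] [CommSemiring R]
    {B : Matrix n n R} (hB : B.IsSymm) (v : n → R) :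
    v ⬝ᵥ ((B * B) *ᵥ v) = (B *ᵥ v) ⬝ᵥ (B *ᵥ v) := by
  rw [← mulVec_mulVec, dotProduct_mulVec, ← mulVec_transpose, hB.eq]

theorem Matrix.add_smul_one_mulVec_dotProduct {n R : Type*} [Fintype n] [DecidableEq n]
    [CommSemiring R] (K : Matrix n n R) (c : R) (w : n → R) :
    ((K + c • 1) *ᵥ w) ⬝ᵥ w = w ⬝ᵥ (K *ᵥ w) + c * (w ⬝ᵥ w) := by
  rw [add_mulVec, smul_mulVec, one_mulVec, add_dotProduct, smul_dotProduct, smul_eq_mul,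
    dotProduct_comm]

theorem IsPSDKernel.gramReg_posDef {S : Type*} {k : S → S → ℝ} (hk : IsPSDKernel k)
    {σ : ℝ} (hσ : 0 < σ) {t : ℕ} (x : Fin t → S) : (gramReg k σ x).PosDef :=
  PosDef.posSemidef_add (hk.2 t x) (PosDef.one.smul (pow_pos hσ 2))

theorem IsPSDKernel.two_mul_kvec_dotProduct_le {S : Type*} {k : S → S → ℝ} (hk : IsPSDKernel k)
    {t : ℕ} (x : Fin t → S) (s : S) (w : Fin t → ℝ) :
    2 * (kvec k x s ⬝ᵥ w) ≤ k s s + w ⬝ᵥ ((Matrix.of fun i j => k (x i) (x j)) *ᵥ w) := by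
  have h := (hk.2 (t + 1) (Fin.cons s x)).dotProduct_mulVec_nonneg (Fin.cons 1 (-w))
  simp only [star_trivial, dotProduct, mulVec, Fin.sum_univ_succ, Fin.cons_zero, Fin.cons_succ,
    of_apply, hk.1 _ s, Pi.neg_apply, kvec, Finset.mul_sum, Finset.sum_add_distrib, mul_add, mul_neg,
    Finset.sum_neg_distrib] at h ⊢
  ring_nf at h ⊢
  simp only [Finset.sum_neg_distrib, mul_comm (w _) (k s _), ← Finset.sum_mul] at h ⊢
  linarith

/-- Quadratic-form bound controlling the noise contribution:
`k_t(x)ᵀ(K_t+σ²I)⁻² k_t(x) ≤ σ⁻²·σ_t²(x)`. -/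
theorem stmt17 {S : Type*} (k : S → S → ℝ) (hk : IsPSDKernel k)
    (σ : ℝ) (hσ : 0 < σ) (t : ℕ) (x : Fin t → S) :
    ∀ s : S,
      kvec k x s ⬝ᵥ (((gramReg k σ x)⁻¹ * (gramReg k σ x)⁻¹) *ᵥ kvec k x s)
        ≤ (σ ^ 2)⁻¹ * postVar k σ x s := by
  intro s
  set A := gramReg k σ x
  set v := kvec k x s
  set w := A⁻¹ *ᵥ v
  have hA := hk.gramReg_posDef hσ x
  have hAw : A *ᵥ w = v := by
    rw [mulVec_mulVec, mul_nonsing_inv _ hA.det_pos.ne'.isUnit, one_mulVec]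
  have hvw : v ⬝ᵥ w = w ⬝ᵥ ((Matrix.of fun i j => k (x i) (x j)) *ᵥ w) + σ ^ 2 * (w ⬝ᵥ w) := by
    rw [← hAw]; exact add_smul_one_mulVec_dotProduct _ _ _
  have hgram := hk.two_mul_kvec_dotProduct_le x s w
  rw [(isHermitian_iff_isSymm.mp hA.isHermitian).inv.dotProduct_mul_self_mulVec, postVar,
    le_inv_mul_iff₀ (by positivity)]
  linarith
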